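/- Let F be an algebraically closed field of characteristic zero and set x₁ = E₁₃ + E₂₄, x₂ = E₁₄, x₃ = E₂₃, x₄ = E₂₄ in 𝔰𝔩₄(F). Then the common centralizer {z ∈ 𝔰𝔩₄(F) : z xᵢ = xᵢ z for i = 1,2,3,4} equals the linear span of {E₁₃, E₁₄, E₂₃, E₂₄} (the matrices whose only nonzero entries lie in the top-right 2×2 block), and in particular it has dimension 4 over F. -/

import Mathlib

open Matrix

set_option maxHeartbeats 1000000
set_option synthInstance.maxHeartbeats 400000

private lemma aux_rep (F : Type*) [Field F] [CharZero F] (z : Matrix (Fin 4) (Fin 4) F)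
    (h0 : z ∈ LieAlgebra.SpecialLinear.sl (Fin 4) F)
    (h1 : z * (single 0 2 1 + single 1 3 1) =
      (single 0 2 1 + single 1 3 1) * z)
    (h2 : z * single 0 3 1 = single 0 3 1 * z)
    (h3 : z * single 1 2 1 = single 1 2 1 * z)
    (h4 : z * single 1 3 1 = single 1 3 1 * z) :
    z = z 0 2 • single 0 2 1 + z 0 3 • single 0 3 1 +
        z 1 2 • single 1 2 1 + z 1 3 • single 1 3 1 := by
  have htr : Matrix.trace z = 0 := h0
  simp only [Matrix.trace, Fin.sum_univ_four, Matrix.diag_apply] at htr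
  have c10 := congrFun (congrFun h2 1) 3
  have c20 := congrFun (congrFun h2 2) 3
  have c30 := congrFun (congrFun h2 3) 3
  have c31 := congrFun (congrFun h2 0) 1
  have c32 := congrFun (congrFun h2 0) 2
  have d03 := congrFun (congrFun h2 0) 3
  have c01 := congrFun (congrFun h3 0) 2
  have c21 := congrFun (congrFun h3 2) 2
  have c23 := congrFun (congrFun h3 1) 3
  have d12 := congrFun (congrFun h3 1) 2
  have d13 := congrFun (congrFun h4 1) 3
  have d02 := congrFun (congrFun h1 0) 2
  simp only [Matrix.add_mul, Matrix.mul_add, Matrix.add_apply, Matrix.mul_apply,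
    Matrix.single, Matrix.of_apply,
    Fin.sum_univ_four] at c10 c20 c30 c31 c32 d03 c01 c21 c23 d12 d13 d02
  simp (config := { decide := true }) only [if_true, if_false, and_true, true_and, and_false,
    false_and, mul_one, mul_zero, one_mul, zero_mul, add_zero,
    zero_add] at c10 c20 c30 c31 c32 d03 c01 c21 c23 d12 d13 d02
  have h33 : z 3 3 = z 0 0 := d03.symm
  have h11 : z 1 1 = z 0 0 := by rw [d13, h33]
  have h22 : z 2 2 = z 0 0 := d02.symm
  rw [h11, h22, h33] at htr
  have hz00 : z 0 0 = 0 := by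
    have h4 : (4 : F) * z 0 0 = 0 := by ring_nf; linear_combination htr
    have : (4 : F) ≠ 0 := by norm_num
    exact (mul_eq_zero.mp h4).resolve_left this
  ext i j
  fin_cases i <;> fin_cases j <;>
    simp only [Matrix.add_apply, Matrix.smul_apply, Matrix.single,
      Matrix.of_apply, smul_eq_mul] <;>
    simp (config := { decide := true }) only [if_true, if_false, and_true, true_and,
      and_false, false_and, mul_one, mul_zero, add_zero, zero_add] <;>
    first
      | rfl | assumption
      | exact hz00 | exact c31.symm | exact c32.symm | exact c23.symm
      | exact h11.trans hz00 | exact h22.trans hz00 | exact h33.trans hz00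

private lemma aux_gen (F : Type*) [Field F] (a b : Fin 4) (ha : a = 0 ∨ a = 1)
    (hb : b = 2 ∨ b = 3) :
    (single a b (1:F)) ∈ LieAlgebra.SpecialLinear.sl (Fin 4) F ∧
    (∀ (c d : Fin 4), (c = 0 ∨ c = 1) → (d = 2 ∨ d = 3) →
      single a b (1:F) * single c d 1 = 0 ∧
      single c d (1:F) * single a b 1 = 0) := by
  constructor
  · show Matrix.trace (single a b (1:F)) = 0
    apply Matrix.trace_single_eq_of_ne
    rcases ha with rfl | rfl <;> rcases hb with rfl | rfl <;> decide
  · rintro c d hc hd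
    constructor <;> apply Matrix.single_mul_single_of_ne <;>
      rcases hb with rfl | rfl <;> rcases hc with rfl | rfl <;>
      rcases ha with rfl | rfl <;> rcases hd with rfl | rfl <;> decide

/-- Let `x₁ = E₁₃ + E₂₄`, `x₂ = E₁₄`, `x₃ = E₂₃`, `x₄ = E₂₄` in `𝔰𝔩₄(F)` (indices here are
zero-based, so `E₁₃ = stdBasisMatrix 0 2 1`, etc.).  The common centralizer
`{z ∈ 𝔰𝔩₄(F) : z xᵢ = xᵢ z, i = 1,…,4}` equals the span of `{E₁₃, E₁₄, E₂₃, E₂₄}`, and in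
particular has dimension `4` over `F`. -/
theorem statement13 (F : Type*) [Field F] [IsAlgClosed F] [CharZero F]
    (x₁ x₂ x₃ x₄ : Matrix (Fin 4) (Fin 4) F)
    (hx₁ : x₁ = single 0 2 1 + single 1 3 1)
    (hx₂ : x₂ = single 0 3 1)
    (hx₃ : x₃ = single 1 2 1)
    (hx₄ : x₄ = single 1 3 1) :
    {z : Matrix (Fin 4) (Fin 4) F | z ∈ LieAlgebra.SpecialLinear.sl (Fin 4) F ∧
        z * x₁ = x₁ * z ∧ z * x₂ = x₂ * z ∧ z * x₃ = x₃ * z ∧ z * x₄ = x₄ * z} =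
      ↑(Submodule.span F
        ({single 0 2 1, single 0 3 1, single 1 2 1,
          single 1 3 1} : Set (Matrix (Fin 4) (Fin 4) F))) ∧
    Module.finrank F
      ↥(Submodule.span F
        ({single 0 2 1, single 0 3 1, single 1 2 1,
          single 1 3 1} : Set (Matrix (Fin 4) (Fin 4) F))) = 4 := by
  subst hx₁ hx₂ hx₃ hx₄
  constructor
  · ext z
    simp only [Set.mem_setOf_eq, SetLike.mem_coe]
    constructor
    · rintro ⟨h0, h1, h2, h3, h4⟩
      rw [aux_rep F z h0 h1 h2 h3 h4]
      have m1 : (single 0 2 1 : Matrix (Fin 4) (Fin 4) F) ∈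
          ({single 0 2 1, single 0 3 1, single 1 2 1,
            single 1 3 1} : Set (Matrix (Fin 4) (Fin 4) F)) := by simp
      have m2 : (single 0 3 1 : Matrix (Fin 4) (Fin 4) F) ∈
          ({single 0 2 1, single 0 3 1, single 1 2 1,
            single 1 3 1} : Set (Matrix (Fin 4) (Fin 4) F)) := by simp
      have m3 : (single 1 2 1 : Matrix (Fin 4) (Fin 4) F) ∈
          ({single 0 2 1, single 0 3 1, single 1 2 1,
            single 1 3 1} : Set (Matrix (Fin 4) (Fin 4) F)) := by simp
      have m4 : (single 1 3 1 : Matrix (Fin 4) (Fin 4) F) ∈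
          ({single 0 2 1, single 0 3 1, single 1 2 1,
            single 1 3 1} : Set (Matrix (Fin 4) (Fin 4) F)) := by simp
      exact add_mem (add_mem (add_mem
        (Submodule.smul_mem _ _ (Submodule.subset_span m1))
        (Submodule.smul_mem _ _ (Submodule.subset_span m2)))
        (Submodule.smul_mem _ _ (Submodule.subset_span m3)))
        (Submodule.smul_mem _ _ (Submodule.subset_span m4))
    · intro hz
      refine Submodule.span_induction ?_ ?_ ?_ ?_ hz
      · rintro w hw
        have hgen : ∃ a b, (a = (0:Fin 4) ∨ a = 1) ∧ (b = (2:Fin 4) ∨ b = 3) ∧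
            w = single a b 1 := by
          rcases hw with rfl | rfl | rfl | rfl
          · exact ⟨0, 2, Or.inl rfl, Or.inl rfl, rfl⟩
          · exact ⟨0, 3, Or.inl rfl, Or.inr rfl, rfl⟩
          · exact ⟨1, 2, Or.inr rfl, Or.inl rfl, rfl⟩
          · exact ⟨1, 3, Or.inr rfl, Or.inr rfl, rfl⟩
        obtain ⟨a, b, ha, hb, rfl⟩ := hgen
        obtain ⟨hsl, hmul⟩ := aux_gen F a b ha hb
        refine ⟨hsl, ?_, ?_, ?_, ?_⟩
        · rw [Matrix.mul_add, Matrix.add_mul,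
            (hmul 0 2 (Or.inl rfl) (Or.inl rfl)).1, (hmul 0 2 (Or.inl rfl) (Or.inl rfl)).2,
            (hmul 1 3 (Or.inr rfl) (Or.inr rfl)).1, (hmul 1 3 (Or.inr rfl) (Or.inr rfl)).2]
        · rw [(hmul 0 3 (Or.inl rfl) (Or.inr rfl)).1, (hmul 0 3 (Or.inl rfl) (Or.inr rfl)).2]
        · rw [(hmul 1 2 (Or.inr rfl) (Or.inl rfl)).1, (hmul 1 2 (Or.inr rfl) (Or.inl rfl)).2]
        · rw [(hmul 1 3 (Or.inr rfl) (Or.inr rfl)).1, (hmul 1 3 (Or.inr rfl) (Or.inr rfl)).2]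
      · exact ⟨Submodule.zero_mem _, by simp, by simp, by simp, by simp⟩
      · rintro u v - - ⟨hu0, hu1, hu2, hu3, hu4⟩ ⟨hv0, hv1, hv2, hv3, hv4⟩
        exact ⟨add_mem hu0 hv0,
          by rw [Matrix.add_mul, hu1, hv1, ← Matrix.mul_add],
          by rw [Matrix.add_mul, hu2, hv2, ← Matrix.mul_add],
          by rw [Matrix.add_mul, hu3, hv3, ← Matrix.mul_add],
          by rw [Matrix.add_mul, hu4, hv4, ← Matrix.mul_add]⟩
      · rintro a u - ⟨hu0, hu1, hu2, hu3, hu4⟩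
        exact ⟨Submodule.smul_mem _ _ hu0,
          by rw [Matrix.smul_mul, Matrix.mul_smul, hu1],
          by rw [Matrix.smul_mul, Matrix.mul_smul, hu2],
          by rw [Matrix.smul_mul, Matrix.mul_smul, hu3],
          by rw [Matrix.smul_mul, Matrix.mul_smul, hu4]⟩
  · have hset : ({single 0 2 1, single 0 3 1, single 1 2 1,
          single 1 3 1} : Set (Matrix (Fin 4) (Fin 4) F)) =
        Set.range ![single 0 2 1, single 0 3 1, single 1 2 1,
            single 1 3 1] := by
      ext z
      simp [Fin.exists_fin_succ, or_assoc]
      tauto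
    rw [hset, finrank_span_eq_card]
    · simp
    · rw [Fintype.linearIndependent_iff]
      intro g hg i
      have h02 := congrFun (congrFun hg 0) 2
      have h03 := congrFun (congrFun hg 0) 3
      have h12 := congrFun (congrFun hg 1) 2
      have h13 := congrFun (congrFun hg 1) 3
      simp [Fin.sum_univ_four, single] at h02 h03 h12 h13
      fin_cases i <;> assumption
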